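/- Coherence bound for unbiased information transfer: let B ∈ B(K) be self-adjoint, A := T(1 ⊗ B), and Σ := ‖T(1 ⊗ B²) − A²‖^{1/2}. Let ψ_x and ψ_y be unit vectors in H with A ψ_x = x ψ_x and A ψ_y = y ψ_y for real numbers x ≠ y. Then for every orthogonal projection P ∈ B(H), |⟨ψ_x, R(P) ψ_y⟩| ≤ (Σ/|x−y|) / √(1 + 4 (Σ/|x−y|)²). -/

import Mathlib

open ContinuousLinearMap

/-! The Hilbert tensor product `H ⊗ K` is modelled by a Hilbert space `L` together
with two commuting unital ⋆-homomorphisms `ι₁ : B(H) → B(L)` and `ι₂ : B(K) → B(L)`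
(playing the roles of `X ↦ X ⊗ 1` and `Y ↦ 1 ⊗ Y`). Given an isometry
`V : H → L`, the quantum operation is `T(X) = V† X V` and its restriction to the
system is `R(P) = T(ι₁ P)`. -/

variable {H K L : Type*}
  [NormedAddCommGroup H] [InnerProductSpace ℂ H] [CompleteSpace H]
  [NormedAddCommGroup K] [InnerProductSpace ℂ K] [CompleteSpace K]
  [NormedAddCommGroup L] [InnerProductSpace ℂ L] [CompleteSpace L]

/-- The quantum operation `T(X) = V† X V` in Stinespring form. -/
noncomputable def qop (V : H →L[ℂ] L) (X : L →L[ℂ] L) : H →L[ℂ] H :=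
  adjoint V ∘L X ∘L V

open scoped InnerProductSpace

/-! Write `φ = V ψ` and `U = ι₁ (2P - 1)`, a self-adjoint unitary commuting with `ι₂ B`.
Since `ψx ⊥ ψy`, `⟪ψx, R(P) ψy⟫ = ⟪φx, U φy⟫ / 2`. The deviations `D = ι₂ B φ - x φ` are
orthogonal to `φ`, and `‖D‖² = ⟪ψ, (T(1 ⊗ B²) - A²) ψ⟫ ≤ Σ²`. Commutation of `U` with `ι₂ B`
gives `⟪U φx, Dy⟫ - ⟪Dx, U φy⟫ = (x - y) ⟪φx, U φy⟫`; as `Dx ⊥ φx`, only the component of `U φy`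
orthogonal to `φx`, of norm `√(1 - b²)` with `b = ‖⟪φx, U φy⟫‖`, is seen by `Dx` (and likewise
for `Dy`). Hence `|x - y| b ≤ 2 Σ √(1 - b²)`, which solves to the stated bound on `b / 2`. -/

theorem IsSelfAdjoint.two_mul_sub_one {R : Type*} [Ring R] [StarRing R] {p : R}
    (hp : IsSelfAdjoint p) : IsSelfAdjoint (2 * p - 1) := by
  rw [two_mul]
  exact (hp.add hp).sub (.one _)

section InnerProductSpace

variable {𝕜 E : Type*} [RCLike 𝕜] [NormedAddCommGroup E] [InnerProductSpace 𝕜 E]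

theorem norm_inner_le_mul_sqrt_of_inner_eq_zero {u D : E} (hu : ‖u‖ = 1)
    (hD : ⟪u, D⟫_𝕜 = 0) (w : E) :
    ‖⟪D, w⟫_𝕜‖ ≤ ‖D‖ * √(‖w‖ ^ 2 - ‖⟪u, w⟫_𝕜‖ ^ 2) := by
  set w' := w - ⟪u, w⟫_𝕜 • u
  have hw' : ⟪w', ⟪u, w⟫_𝕜 • u⟫_𝕜 = 0 := by
    simp [w', inner_sub_left, inner_smul_right, inner_smul_left, inner_self_eq_norm_sq_to_K, hu]
  have hpyth : ‖w‖ ^ 2 - ‖⟪u, w⟫_𝕜‖ ^ 2 = ‖w'‖ ^ 2 := by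
    have := norm_add_sq_eq_norm_sq_add_norm_sq_of_inner_eq_zero w' _ hw'
    rw [sub_add_cancel, norm_smul, hu, mul_one] at this
    linarith
  have hDw : ⟪D, w⟫_𝕜 = ⟪D, w'⟫_𝕜 := by
    rw [inner_sub_right, inner_smul_right, inner_eq_zero_symm.mp hD, mul_zero, sub_zero]
  rw [hpyth, Real.sqrt_sq (norm_nonneg _), hDw]
  exact norm_inner_le_norm D w'

theorem inner_apply_sub_smul_eq_zero {A : E →L[𝕜] E} {u : E} (hu : ‖u‖ = 1) {x : 𝕜}
    (hx : ⟪u, A u⟫_𝕜 = x) : ⟪u, A u - x • u⟫_𝕜 = 0 := by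
  rw [inner_sub_right, inner_smul_right, inner_self_eq_one_of_norm_eq_one hu, hx, mul_one,
    sub_self]

theorem inner_two_mul_sub_one_apply_of_inner_eq_zero (Q : E →L[𝕜] E) {u v : E}
    (huv : ⟪u, v⟫_𝕜 = 0) : ⟪u, (2 * Q - 1) v⟫_𝕜 = 2 * ⟪u, Q v⟫_𝕜 := by
  rw [two_mul, sub_apply, add_apply, one_apply_eq_self, inner_sub_right, inner_add_right, huv,
    sub_zero, two_mul]

variable [CompleteSpace E]

theorem inner_sub_inner_eq_sub_mul_inner_of_commute {A U : E →L[𝕜] E} (hA : IsSelfAdjoint A)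
    (hU : IsSelfAdjoint U) (hAU : Commute A U) (u v : E) (x y : ℝ) :
    ⟪U u, A v - (y : 𝕜) • v⟫_𝕜 - ⟪A u - (x : 𝕜) • u, U v⟫_𝕜 = (x - y : 𝕜) * ⟪u, U v⟫_𝕜 := by
  have hUsymm : ∀ a b, ⟪U a, b⟫_𝕜 = ⟪a, U b⟫_𝕜 := hU.isSymmetric
  have hUA : ⟪U u, A v⟫_𝕜 = ⟪A u, U v⟫_𝕜 := by
    rw [hUsymm, ← mul_apply_eq_comp, ← hAU.eq, mul_apply_eq_comp]
    exact (hA.isSymmetric u (U v)).symm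
  simp only [inner_sub_left, inner_sub_right, inner_smul_left, inner_smul_right, RCLike.conj_ofReal,
    hUA, hUsymm u v]
  ring

theorem abs_sub_mul_norm_inner_le {A U : E →L[𝕜] E} (hA : IsSelfAdjoint A)
    (hU : IsSelfAdjoint U) (hU_unitary : U ∈ unitary (E →L[𝕜] E)) (hAU : Commute A U)
    {u v : E} (hu : ‖u‖ = 1) (hv : ‖v‖ = 1) {x y : ℝ} (hx : ⟪u, A u⟫_𝕜 = x)
    (hy : ⟪v, A v⟫_𝕜 = y) :
    |x - y| * ‖⟪u, U v⟫_𝕜‖ ≤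
      (‖A u - (x : 𝕜) • u‖ + ‖A v - (y : 𝕜) • v‖) * √(1 - ‖⟪u, U v⟫_𝕜‖ ^ 2) := by
  have hvu : ‖⟪v, U u⟫_𝕜‖ = ‖⟪u, U v⟫_𝕜‖ := by
    rw [norm_inner_symm]
    exact congrArg norm (hU.isSymmetric u v)
  have hu' := norm_inner_le_mul_sqrt_of_inner_eq_zero hu (inner_apply_sub_smul_eq_zero hu hx) (U v)
  have hv' := norm_inner_le_mul_sqrt_of_inner_eq_zero hv (inner_apply_sub_smul_eq_zero hv hy) (U u)
  rw [norm_map_of_mem_unitary hU_unitary, hv, one_pow] at hu'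
  rw [norm_map_of_mem_unitary hU_unitary, hu, one_pow, hvu] at hv'
  calc |x - y| * ‖⟪u, U v⟫_𝕜‖ = ‖(x - y : 𝕜) * ⟪u, U v⟫_𝕜‖ := by
        rw [norm_mul, ← RCLike.ofReal_sub, RCLike.norm_ofReal]
    _ = ‖⟪U u, A v - (y : 𝕜) • v⟫_𝕜 - ⟪A u - (x : 𝕜) • u, U v⟫_𝕜‖ := by
        rw [inner_sub_inner_eq_sub_mul_inner_of_commute hA hU hAU]
    _ ≤ ‖⟪A v - (y : 𝕜) • v, U u⟫_𝕜‖ + ‖⟪A u - (x : 𝕜) • u, U v⟫_𝕜‖ := by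
        rw [← norm_inner_symm]
        exact norm_sub_le _ _
    _ ≤ _ := by linarith

end InnerProductSpace

theorem half_le_div_sqrt_of_le_mul_sqrt {b s : ℝ} (hb : 0 ≤ b) (hs : 0 ≤ s)
    (h : b ≤ 2 * s * √(1 - b ^ 2)) : b / 2 ≤ s / √(1 + 4 * s ^ 2) := by
  have hb1 : 0 ≤ 1 - b ^ 2 := by
    by_contra hneg
    rw [Real.sqrt_eq_zero_of_nonpos (not_le.mp hneg).le, mul_zero] at h
    nlinarith
  have hsq : (b * √(1 + 4 * s ^ 2)) ^ 2 ≤ (2 * s) ^ 2 := by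
    have := pow_le_pow_left₀ hb h 2
    rw [mul_pow, Real.sq_sqrt hb1] at this
    rw [mul_pow, Real.sq_sqrt (by positivity)]
    nlinarith
  rw [le_div_iff₀ (by positivity)]
  have := (pow_le_pow_iff_left₀ (by positivity) (by positivity) two_ne_zero).mp hsq
  linarith

theorem inner_qop_apply (V : H →L[ℂ] L) (X : L →L[ℂ] L) (ψ φ : H) :
    ⟪ψ, qop V X φ⟫_ℂ = ⟪V ψ, X (V φ)⟫_ℂ := by
  simp [qop, adjoint_inner_right]

theorem isSelfAdjoint_qop (V : H →L[ℂ] L) {X : L →L[ℂ] L} (hX : IsSelfAdjoint X) :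
    IsSelfAdjoint (qop V X) :=
  hX.adjoint_conj V

theorem inner_apply_of_qop_apply_eq_smul {V : H →L[ℂ] L} {X : L →L[ℂ] L} {ψ : H} {c : ℂ}
    (hψ : qop V X ψ = c • ψ) : ⟪V ψ, X (V ψ)⟫_ℂ = c * ⟪ψ, ψ⟫_ℂ := by
  rw [← inner_qop_apply, hψ, inner_smul_right]

theorem inner_qop_variance_self {V : H →L[ℂ] L} (hV : adjoint V ∘L V = 1) {X : L →L[ℂ] L}
    (hX : IsSelfAdjoint X) {ψ : H} {x : ℝ} (hψ : qop V X ψ = (x : ℂ) • ψ) :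
    ⟪ψ, (qop V (X ^ 2) - qop V X ^ 2) ψ⟫_ℂ =
      ⟪X (V ψ) - (x : ℂ) • V ψ, X (V ψ) - (x : ℂ) • V ψ⟫_ℂ := by
  have hXsymm : ∀ a b, ⟪X a, b⟫_ℂ = ⟪a, X b⟫_ℂ := hX.isSymmetric
  have hVV : ⟪V ψ, V ψ⟫_ℂ = ⟪ψ, ψ⟫_ℂ := V.inner_map_map_iff_adjoint_comp_self.mpr hV ψ ψ
  have hsq : ⟪ψ, qop V (X ^ 2) ψ⟫_ℂ = ⟪X (V ψ), X (V ψ)⟫_ℂ := by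
    rw [inner_qop_apply, sq, mul_apply_eq_comp, hXsymm]
  have hsq' : ⟪ψ, (qop V X ^ 2) ψ⟫_ℂ = x ^ 2 * ⟪ψ, ψ⟫_ℂ := by
    rw [sq, mul_apply_eq_comp, hψ, map_smul, hψ, smul_smul, inner_smul_right, sq]
  simp only [sub_apply, inner_sub_left, inner_sub_right, inner_smul_left, inner_smul_right, hsq,
    hsq', hXsymm, inner_apply_of_qop_apply_eq_smul hψ, hVV, Complex.conj_ofReal]
  ring

theorem norm_apply_sub_smul_le {V : H →L[ℂ] L} (hV : adjoint V ∘L V = 1) {X : L →L[ℂ] L}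
    (hX : IsSelfAdjoint X) {ψ : H} {x : ℝ} (hψ : qop V X ψ = (x : ℂ) • ψ) :
    ‖X (V ψ) - (x : ℂ) • V ψ‖ ≤ √‖qop V (X ^ 2) - qop V X ^ 2‖ * ‖ψ‖ := by
  rw [← Real.sqrt_sq (norm_nonneg ψ), ← Real.sqrt_mul (norm_nonneg _),
    Real.le_sqrt (norm_nonneg _) (by positivity), ← inner_self_eq_norm_sq (𝕜 := ℂ),
    ← inner_qop_variance_self hV hX hψ]
  calc RCLike.re ⟪ψ, (qop V (X ^ 2) - qop V X ^ 2) ψ⟫_ℂ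
      ≤ ‖ψ‖ * ‖(qop V (X ^ 2) - qop V X ^ 2) ψ‖ := re_inner_le_norm _ _
    _ ≤ ‖ψ‖ * (‖qop V (X ^ 2) - qop V X ^ 2‖ * ‖ψ‖) := by gcongr; exact le_opNorm _ _
    _ = ‖qop V (X ^ 2) - qop V X ^ 2‖ * ‖ψ‖ ^ 2 := by ring

theorem abs_sub_mul_norm_inner_map_le {V : H →L[ℂ] L} (hV : adjoint V ∘L V = 1)
    {A U : L →L[ℂ] L} (hA : IsSelfAdjoint A) (hU : IsSelfAdjoint U)
    (hU_unitary : U ∈ unitary (L →L[ℂ] L)) (hAU : Commute A U) {ψx ψy : H} (hψx : ‖ψx‖ = 1)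
    (hψy : ‖ψy‖ = 1) {x y : ℝ} (hx : qop V A ψx = (x : ℂ) • ψx)
    (hy : qop V A ψy = (y : ℂ) • ψy) :
    |x - y| * ‖⟪V ψx, U (V ψy)⟫_ℂ‖ ≤
      2 * √‖qop V (A ^ 2) - qop V A ^ 2‖ * √(1 - ‖⟪V ψx, U (V ψy)⟫_ℂ‖ ^ 2) := by
  have hVψ : ∀ {ψ}, ‖ψ‖ = 1 → ‖V ψ‖ = 1 := fun hψ ↦
    (V.norm_map_iff_adjoint_comp_self.mpr hV _).trans hψ
  have hmean : ∀ {ψ : H} {x : ℝ}, ‖ψ‖ = 1 → qop V A ψ = (x : ℂ) • ψ →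
      ⟪V ψ, A (V ψ)⟫_ℂ = x := fun hψ hψx ↦ by
    rw [inner_apply_of_qop_apply_eq_smul hψx, inner_self_eq_one_of_norm_eq_one hψ, mul_one]
  have hdev : ∀ {ψ : H} {x : ℝ}, ‖ψ‖ = 1 → qop V A ψ = (x : ℂ) • ψ →
      ‖A (V ψ) - (x : ℂ) • V ψ‖ ≤ √‖qop V (A ^ 2) - qop V A ^ 2‖ := fun hψ hψx ↦ by
    simpa only [hψ, mul_one] using norm_apply_sub_smul_le hV hA hψx
  refine (abs_sub_mul_norm_inner_le hA hU hU_unitary hAU (hVψ hψx) (hVψ hψy) (hmean hψx hx)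
    (hmean hψy hy)).trans ?_
  rw [mul_assoc, two_mul, add_mul]
  gcongr
  exacts [hdev hψx hx, hdev hψy hy]

/-- Coherence bound for unbiased information transfer: with `A := T(1 ⊗ B)`,
`Σ := ‖T(1 ⊗ B²) − A²‖^(1/2)`, and eigenvectors `A ψx = x ψx`, `A ψy = y ψy`
with `x ≠ y`, every orthogonal projection `P` satisfies
`|⟨ψx, R(P) ψy⟩| ≤ (Σ/|x−y|) / √(1 + 4 (Σ/|x−y|)²)`. -/
theorem coherence_bound_unbiased
    (ι₁ : (H →L[ℂ] H) →⋆ₐ[ℂ] (L →L[ℂ] L)) (ι₂ : (K →L[ℂ] K) →⋆ₐ[ℂ] (L →L[ℂ] L))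
    (hcomm : ∀ X Y, ι₁ X * ι₂ Y = ι₂ Y * ι₁ X)
    (V : H →L[ℂ] L) (hV : adjoint V ∘L V = 1)
    (B : K →L[ℂ] K) (hB : IsSelfAdjoint B)
    (ψx ψy : H) (hψx : ‖ψx‖ = 1) (hψy : ‖ψy‖ = 1)
    (x y : ℝ) (hxy : x ≠ y)
    (hx : qop V (ι₂ B) ψx = (x : ℂ) • ψx) (hy : qop V (ι₂ B) ψy = (y : ℂ) • ψy) :
    ∀ P : H →L[ℂ] H, IsIdempotentElem P → IsSelfAdjoint P →
      ‖⟪ψx, qop V (ι₁ P) ψy⟫_ℂ‖ ≤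
        (Real.sqrt ‖qop V (ι₂ (B ^ 2)) - qop V (ι₂ B) ^ 2‖ / |x - y|) /
          Real.sqrt (1 + 4 * (Real.sqrt ‖qop V (ι₂ (B ^ 2)) - qop V (ι₂ B) ^ 2‖ / |x - y|) ^ 2) := by
  intro P hP hPsa
  have hA : IsSelfAdjoint (ι₂ B) := hB.map ι₂
  have hortho : ⟪V ψx, V ψy⟫_ℂ = 0 := by
    rw [V.inner_map_map_iff_adjoint_comp_self.mpr hV]
    exact (isSelfAdjoint_qop V hA).isSymmetric.orthogonalFamily_eigenspaces
      (by exact_mod_cast hxy) ⟨ψx, Module.End.mem_eigenspace_iff.mpr hx⟩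
      ⟨ψy, Module.End.mem_eigenspace_iff.mpr hy⟩
  have hcoh : ⟪ψx, qop V (ι₁ P) ψy⟫_ℂ = ⟪V ψx, ι₁ (2 * P - 1) (V ψy)⟫_ℂ / 2 := by
    rw [map_sub, map_mul, map_ofNat, map_one,
      inner_two_mul_sub_one_apply_of_inner_eq_zero _ hortho, inner_qop_apply]
    ring
  have hb := abs_sub_mul_norm_inner_map_le hV hA (hPsa.two_mul_sub_one.map ι₁)
    (Unitary.map_mem ι₁ (IsStarProjection.two_mul_sub_one_mem_unitary ⟨hP, hPsa⟩))
    (hcomm _ B).symm hψx hψy hx hy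
  rw [← map_pow] at hb
  rw [hcoh, norm_div, Complex.norm_two]
  refine half_le_div_sqrt_of_le_mul_sqrt (norm_nonneg _) (by positivity) ?_
  rw [mul_div_assoc', div_mul_eq_mul_div, le_div_iff₀ (abs_pos.mpr (sub_ne_zero.mpr hxy))]
  linarith
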